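/- Let G be a finite multigraph with maximum degree at most Δ, and let x, y be vertices at distance t. Then n_G(x,y) ≤ 2 · (Δ/2)^t, where n_G(x,y) is the number of shortest x–y paths. -/

import Mathlib

/-- A multigraph on vertex type `V` with edge type `E`: each edge has an
unordered pair of endpoints (parallel edges and loops are allowed). -/
structure Multigraph (V : Type) (E : Type) where
  ends : E → Sym2 V

namespace Multigraph

variable {V E : Type}

/-- A walk of length `n` from `x` to `y` in a multigraph, recorded by its
sequence of vertices and edges. -/
@[ext]
structure Walk (G : Multigraph V E) (x y : V) (n : ℕ) where
  vert : Fin (n + 1) → V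
  edge : Fin n → E
  vert_zero : vert 0 = x
  vert_last : vert (Fin.last n) = y
  ends_eq : ∀ i : Fin n, G.ends (edge i) = s(vert i.castSucc, vert i.succ)

/-- The graph distance between two vertices (junk value `0` by `sInf` of `∅`
if they are not connected). -/
noncomputable def dist (G : Multigraph V E) (x y : V) : ℕ :=
  sInf {n | Nonempty (G.Walk x y n)}

/-- The degree of a vertex: the number of edges incident to it. -/
noncomputable def degree (G : Multigraph V E) (v : V) : ℕ :=
  Nat.card {e : E // v ∈ G.ends e}

/-- The number of shortest paths between `x` and `y`: the number of walks
whose length is the distance (such walks are automatically paths). -/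
noncomputable def numShortestPaths (G : Multigraph V E) (x y : V) : ℕ :=
  Nat.card (G.Walk x y (G.dist x y))

/-- Distance from a vertex to an edge: the least distance to an endpoint. -/
noncomputable def distToEdge (G : Multigraph V E) (x : V) (e : E) : ℕ :=
  sInf {d | ∃ v ∈ G.ends e, G.dist x v = d}

noncomputable instance {G : Multigraph V E} {x y : V} {n : ℕ} [Fintype V] [Fintype E] :
    Fintype (G.Walk x y n) := by
  classical
  exact Fintype.ofInjective (fun w => (w.vert, w.edge)) (fun a b h => by
    cases a; cases b; simp_all)

end Multigraph

/-!
Let `d = dist x ·`; every shortest `x`–`y` path `v₀ … vₜ` climbs one level of `d` per step.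
Let `F v` and `B v` count the edges from `v` one level up and one level down, so that
`F v + B v ≤ Δ`. The random walk from `x` that always moves up along a uniformly chosen edge
follows the path with probability `p = ∏_{i<t} 1 / F vᵢ`, and the walk from `y` that always moves
down follows it backwards with probability `q = ∏_{i>0} 1 / B vᵢ`; summed over all shortest
paths, both are at most `1`. Since `F v * B v ≤ (Δ/2)²`,
`1 / (p q) = F v₀ * B vₜ * ∏_{0<i<t} F vᵢ * B vᵢ ≤ (2 (Δ/2)^t)²`, so by AM-GM every shortest
path has `p + q ≥ 2 √(p q) ≥ (Δ/2)^(-t)`, and summing gives `n_G(x,y) ≤ 2 (Δ/2)^t`.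
-/

theorem eq_val_of_succ_le_add_one {n : ℕ} {a : Fin (n + 1) → ℕ} (h0 : a 0 = 0)
    (hlast : a (Fin.last n) = n) (hstep : ∀ i : Fin n, a i.succ ≤ a i.castSucc + 1)
    (i : Fin (n + 1)) : a i = i := by
  have hgrowth : ∀ (j k : ℕ) (h : j + k < n + 1), a ⟨j + k, h⟩ ≤ a ⟨j, by omega⟩ + k := by
    intro j k
    induction k with
    | zero => simp
    | succ k ih =>
      intro h
      show a ⟨j + k + 1, h⟩ ≤ _
      have := hstep ⟨j + k, by omega⟩
      have := ih (by omega)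
      simp only [Fin.succ_mk, Fin.castSucc_mk] at *
      omega
  have hle := hgrowth 0 i (by omega)
  have hge := hgrowth i (n - i) (by omega)
  simp only [zero_add, Fin.eta, Fin.mk_zero, h0] at hle
  simp only [show (i : ℕ) + (n - i) = n by omega, Fin.eta] at hge
  rw [← Fin.last, hlast] at hge
  omega

theorem prod_castSucc_mul_prod_succ_le {n : ℕ} {c : ℝ} (a b : Fin (n + 1) → ℝ)
    (ha : ∀ i, 0 ≤ a i) (hb : ∀ i, 0 ≤ b i) (hab : ∀ i, a i + b i ≤ c) :
    (∏ i : Fin n, a i.castSucc) * ∏ i : Fin n, b i.succ ≤ (2 * (c / 2) ^ n) ^ 2 := by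
  cases n with
  | zero => norm_num
  | succ m =>
    rw [Fin.prod_univ_succ, Fin.prod_univ_castSucc, Fin.castSucc_zero, Fin.succ_last]
    have hpair : ∀ i : Fin m, a i.succ.castSucc * b i.castSucc.succ ≤ (c / 2) ^ 2 := by
      intro i
      rw [Fin.succ_castSucc]
      nlinarith [sq_nonneg (a i.succ.castSucc - b i.succ.castSucc), ha i.succ.castSucc,
        hb i.succ.castSucc, hab i.succ.castSucc]
    have hfirst : a 0 ≤ c := by linarith [hab 0, hb 0]
    have hlast : b (Fin.last _) ≤ c := by linarith [hab (Fin.last _), ha (Fin.last _)]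
    calc a 0 * (∏ i : Fin m, a i.succ.castSucc) *
          ((∏ i : Fin m, b i.castSucc.succ) * b (Fin.last _))
        = a 0 * b (Fin.last _) * ∏ i : Fin m, a i.succ.castSucc * b i.castSucc.succ := by
          rw [Finset.prod_mul_distrib]; ring
      _ ≤ c * c * ∏ _i : Fin m, (c / 2) ^ 2 :=
          mul_le_mul (mul_le_mul hfirst hlast (hb _) ((ha 0).trans hfirst))
            (Finset.prod_le_prod (fun _ _ => mul_nonneg (ha _) (hb _)) fun i _ => hpair i)
            (Finset.prod_nonneg fun _ _ => mul_nonneg (ha _) (hb _))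
            (mul_self_nonneg c)
      _ = (2 * (c / 2) ^ (m + 1)) ^ 2 := by
          rw [Finset.prod_const, Finset.card_univ, Fintype.card_fin, ← pow_mul, mul_comm 2 m,
            pow_mul]
          ring

theorem two_le_mul_inv_add_inv {P Q C : ℝ} (hP : 0 < P) (hQ : 0 < Q) (hC : 0 ≤ C)
    (h : P * Q ≤ C ^ 2) : 2 ≤ C * (P⁻¹ + Q⁻¹) := by
  rw [inv_add_inv hP.ne' hQ.ne', mul_div_assoc', le_div_iff₀ (mul_pos hP hQ)]
  nlinarith [sq_nonneg (P - Q), mul_pos hP hQ, sq_nonneg (C * (Q + P) - 2 * (P * Q))]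

namespace Multigraph

variable {V E : Type} {G : Multigraph V E}

namespace Walk

def nil (G : Multigraph V E) (x : V) : G.Walk x x 0 where
  vert _ := x
  edge := Fin.elim0
  vert_zero := rfl
  vert_last := rfl
  ends_eq i := i.elim0

theorem eq_of_length_zero {x y : V} (w : G.Walk x y 0) : x = y :=
  w.vert_zero.symm.trans w.vert_last

instance {x y : V} : Subsingleton (G.Walk x y 0) :=
  ⟨fun w w' => by
    ext i
    · rw [Fin.fin_one_eq_zero i, w.vert_zero, w'.vert_zero]
    · exact i.elim0⟩

def reverse {x y : V} {n : ℕ} (w : G.Walk x y n) : G.Walk y x n where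
  vert i := w.vert i.rev
  edge i := w.edge i.rev
  vert_zero := by rw [Fin.rev_zero, w.vert_last]
  vert_last := by rw [Fin.rev_last, w.vert_zero]
  ends_eq i := by rw [w.ends_eq, Fin.rev_castSucc, Fin.rev_succ, Sym2.eq_swap]

theorem reverse_reverse {x y : V} {n : ℕ} (w : G.Walk x y n) : w.reverse.reverse = w := by
  ext i <;> simp [reverse]

def reverseEquiv (x y : V) (n : ℕ) : G.Walk x y n ≃ G.Walk y x n :=
  ⟨reverse, reverse, reverse_reverse, reverse_reverse⟩

def snoc {x u v : V} {n : ℕ} (w : G.Walk x u n) (e : E) (h : G.ends e = s(u, v)) :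
    G.Walk x v (n + 1) where
  vert := Fin.snoc w.vert v
  edge := Fin.snoc w.edge e
  vert_zero := by rw [← Fin.castSucc_zero, Fin.snoc_castSucc, w.vert_zero]
  vert_last := Fin.snoc_last _ _
  ends_eq i := by
    induction i using Fin.lastCases with
    | last => rw [Fin.snoc_last, Fin.succ_last, Fin.snoc_last, Fin.snoc_castSucc, w.vert_last, h]
    | cast j =>
      rw [Fin.snoc_castSucc, Fin.succ_castSucc, Fin.snoc_castSucc, Fin.snoc_castSucc, w.ends_eq]

def init {x v : V} {n : ℕ} (w : G.Walk x v (n + 1)) :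
    G.Walk x (w.vert (Fin.last n).castSucc) n where
  vert := Fin.init w.vert
  edge := Fin.init w.edge
  vert_zero := w.vert_zero
  vert_last := rfl
  ends_eq j := by
    rw [Fin.init, Fin.init, Fin.init, w.ends_eq, Fin.succ_castSucc]

theorem snoc_injective (x v : V) (n : ℕ) :
    Function.Injective fun p : Σ u, {e : E // G.ends e = s(u, v)} × G.Walk x u n =>
      p.2.2.snoc p.2.1.1 p.2.1.2 := by
  rintro ⟨u, ⟨e, he⟩, w⟩ ⟨u', ⟨e', he'⟩, w'⟩ h
  have hvert : w.vert = w'.vert := by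
    simpa only [snoc, Fin.init_snoc] using congrArg (fun w => Fin.init w.vert) h
  obtain rfl : u = u' := by rw [← w.vert_last, ← w'.vert_last, hvert]
  obtain rfl : e = e' := by
    simpa only [snoc, Fin.snoc_last] using congrFun (congrArg Walk.edge h) (Fin.last n)
  obtain rfl : w = w' := by
    ext i
    · rw [hvert]
    · simpa only [snoc, Fin.snoc_castSucc] using congrFun (congrArg Walk.edge h) i.castSucc
  rfl

theorem ends_edge_last {x v : V} {n : ℕ} (w : G.Walk x v (n + 1)) :
    G.ends (w.edge (Fin.last n)) = s(w.vert (Fin.last n).castSucc, v) := by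
  rw [w.ends_eq, Fin.succ_last, w.vert_last]

theorem snoc_init {x v : V} {n : ℕ} (w : G.Walk x v (n + 1)) :
    w.init.snoc (w.edge (Fin.last n)) w.ends_edge_last = w := by
  ext i
  · simp only [snoc, init]
    conv_rhs => rw [← Fin.snoc_init_self w.vert, w.vert_last]
  · simp only [snoc, init, Fin.snoc_init_self]

noncomputable def snocEquiv (x v : V) (n : ℕ) :
    (Σ u, {e : E // G.ends e = s(u, v)} × G.Walk x u n) ≃ G.Walk x v (n + 1) :=
  Equiv.ofBijective _ ⟨snoc_injective x v n, fun w =>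
    ⟨⟨_, ⟨w.edge (Fin.last n), w.ends_edge_last⟩, w.init⟩, w.snoc_init⟩⟩

@[simp]
theorem snocEquiv_apply {x v : V} {n : ℕ}
    (p : Σ u, {e : E // G.ends e = s(u, v)} × G.Walk x u n) :
    snocEquiv x v n p = p.2.2.snoc p.2.1.1 p.2.1.2 :=
  rfl

end Walk

theorem dist_self (x : V) : G.dist x x = 0 :=
  Nat.sInf_eq_zero.mpr (Or.inl ⟨Walk.nil G x⟩)

theorem Walk.dist_le {x y : V} {n : ℕ} (w : G.Walk x y n) : G.dist x y ≤ n :=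
  Nat.sInf_le ⟨w⟩

theorem dist_le_dist_add_one (x : V) {e : E} {u v : V} (h : G.ends e = s(u, v)) :
    G.dist x v ≤ G.dist x u + 1 := by
  rcases Set.eq_empty_or_nonempty {n | Nonempty (G.Walk x u n)} with hu | hu
  · suffices {n | Nonempty (G.Walk x v n)} = ∅ by simp [dist, this]
    refine Set.eq_empty_of_forall_notMem fun n ⟨w⟩ => ?_
    exact (Set.eq_empty_iff_forall_notMem.mp hu) (n + 1) ⟨w.snoc e (by rw [h, Sym2.eq_swap])⟩
  · obtain ⟨w⟩ := Nat.sInf_mem hu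
    exact (w.snoc e h).dist_le

theorem Walk.dist_vert_of_length_dist {x y : V} (w : G.Walk x y (G.dist x y))
    (i : Fin (G.dist x y + 1)) : G.dist x (w.vert i) = i :=
  eq_val_of_succ_le_add_one (a := fun i => G.dist x (w.vert i))
    (by rw [w.vert_zero, dist_self]) (by rw [w.vert_last])
    (fun i => dist_le_dist_add_one x (w.ends_eq i)) i

noncomputable def ascDegree (G : Multigraph V E) (L : V → ℤ) (u : V) : ℕ :=
  Nat.card {e : E // ∃ v, G.ends e = s(u, v) ∧ L v = L u + 1}

/-- Transition probability, per edge from `u` to `v`, of the random walk that always moves one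
level up `L` along a uniformly chosen edge; `Walk.ascWeight` is the probability that this walk
follows a given walk. -/
noncomputable def ascStep (G : Multigraph V E) (L : V → ℤ) (u v : V) : ℝ :=
  if L v = L u + 1 then (G.ascDegree L u : ℝ)⁻¹ else 0

noncomputable def Walk.ascWeight {x y : V} {n : ℕ} (L : V → ℤ) (w : G.Walk x y n) : ℝ :=
  ∏ i : Fin n, G.ascStep L (w.vert i.castSucc) (w.vert i.succ)

theorem ascStep_nonneg (L : V → ℤ) (u v : V) : 0 ≤ G.ascStep L u v := by
  unfold ascStep; split_ifs <;> positivity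

theorem ascStep_of_eq {L : V → ℤ} {u v : V} (h : L v = L u + 1) :
    G.ascStep L u v = (G.ascDegree L u : ℝ)⁻¹ :=
  if_pos h

theorem ascDegree_pos [Finite E] {L : V → ℤ} {e : E} {u v : V} (he : G.ends e = s(u, v))
    (h : L v = L u + 1) : 0 < G.ascDegree L u :=
  Nat.card_pos_iff.mpr ⟨⟨⟨e, v, he, h⟩⟩, inferInstance⟩

theorem ascDegree_add_ascDegree_neg_le_degree [Finite E] (L : V → ℤ) (v : V) :
    G.ascDegree L v + G.ascDegree (-L) v ≤ G.degree v := by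
  rw [ascDegree, ascDegree, ← Nat.card_sum, degree]
  refine Nat.card_le_card_of_injective
    (Sum.elim (fun e => ⟨e.1, ?_⟩) (fun e => ⟨e.1, ?_⟩)) ?_
  · obtain ⟨u, hu, -⟩ := e.2; rw [hu]; exact Sym2.mem_mk_left _ _
  · obtain ⟨u, hu, -⟩ := e.2; rw [hu]; exact Sym2.mem_mk_left _ _
  rintro (⟨e, u, hu, hLu⟩ | ⟨e, u, hu, hLu⟩) (⟨e', u', hu', hLu'⟩ | ⟨e', u', hu', hLu'⟩) h <;>
    simp only [Sum.elim_inl, Sum.elim_inr, Subtype.mk.injEq] at h <;> subst h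
  · rfl
  · obtain rfl := Sym2.congr_right.mp (hu.symm.trans hu')
    simp only [Pi.neg_apply] at hLu'; omega
  · obtain rfl := Sym2.congr_right.mp (hu.symm.trans hu')
    simp only [Pi.neg_apply] at hLu; omega
  · rfl

theorem sum_ascStep_le_one [Fintype V] [Fintype E] [DecidableEq V] (L : V → ℤ) (u : V) :
    ∑ v, ∑ _e : {e : E // G.ends e = s(u, v)}, G.ascStep L u v ≤ 1 := by
  rw [← Fintype.sum_sigma (fun p : Σ v, {e : E // G.ends e = s(u, v)} => G.ascStep L u p.1)]
  simp only [ascStep, Finset.sum_ite, Finset.sum_const_zero, add_zero, Finset.sum_const,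
    nsmul_eq_mul, ← div_eq_mul_inv]
  refine div_le_one_of_le₀ ?_ (Nat.cast_nonneg _)
  rw [← Fintype.card_subtype, ← Nat.card_eq_fintype_card, ascDegree, Nat.cast_le]
  refine Nat.card_le_card_of_injective (fun p => ⟨p.1.2.1, p.1.1, p.1.2.2, p.2⟩) ?_
  rintro ⟨⟨v, e, he⟩, hv⟩ ⟨⟨v', e', he'⟩, hv'⟩ h
  simp only [Subtype.mk.injEq] at h
  subst h
  obtain rfl := Sym2.congr_right.mp (he.symm.trans he')
  rfl

theorem Walk.ascWeight_nonneg {x y : V} {n : ℕ} (L : V → ℤ) (w : G.Walk x y n) :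
    0 ≤ w.ascWeight L :=
  Finset.prod_nonneg fun _ _ => ascStep_nonneg L _ _

theorem Walk.ascWeight_snoc {x u v : V} {n : ℕ} (L : V → ℤ) (w : G.Walk x u n) (e : E)
    (h : G.ends e = s(u, v)) : (w.snoc e h).ascWeight L = w.ascWeight L * G.ascStep L u v := by
  rw [ascWeight, Fin.prod_univ_castSucc]
  simp only [snoc, Fin.succ_castSucc, Fin.snoc_castSucc, Fin.succ_last, Fin.snoc_last,
    ascWeight, w.vert_last]

theorem sum_sum_ascWeight_le_one [Fintype V] [Fintype E] (L : V → ℤ) (z : V) (n : ℕ) :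
    ∑ v, ∑ w : G.Walk z v n, w.ascWeight L ≤ 1 := by
  classical
  induction n with
  | zero =>
    rw [Finset.sum_eq_single z (fun v _ hv => ?_) (by simp)]
    · simp only [Walk.ascWeight, Finset.univ_eq_empty, Finset.prod_empty, Finset.sum_const,
        nsmul_eq_mul, mul_one, Nat.cast_le_one]
      exact Fintype.card_le_one_iff_subsingleton.mpr inferInstance
    · have : IsEmpty (G.Walk z v 0) := ⟨fun w => hv w.eq_of_length_zero.symm⟩
      simp
  | succ n ih =>
    calc ∑ v, ∑ w : G.Walk z v (n + 1), w.ascWeight L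
        = ∑ v, ∑ u, ∑ _e : {e : E // G.ends e = s(u, v)}, ∑ w : G.Walk z u n,
            w.ascWeight L * G.ascStep L u v := by
          refine Finset.sum_congr rfl fun v _ => ?_
          rw [← (Walk.snocEquiv z v n).sum_comp, Fintype.sum_sigma]
          simp only [Fintype.sum_prod_type, Walk.snocEquiv_apply, Walk.ascWeight_snoc]
      _ = ∑ u, (∑ w : G.Walk z u n, w.ascWeight L) *
            ∑ v, ∑ _e : {e : E // G.ends e = s(u, v)}, G.ascStep L u v := by
          rw [Finset.sum_comm]
          simp only [Finset.mul_sum, Finset.sum_mul]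
      _ ≤ ∑ u, ∑ w : G.Walk z u n, w.ascWeight L :=
          Finset.sum_le_sum fun u _ => mul_le_of_le_one_right
            (Finset.sum_nonneg fun w _ => w.ascWeight_nonneg L) (sum_ascStep_le_one L u)
      _ ≤ 1 := ih

theorem sum_ascWeight_le_one [Fintype V] [Fintype E] (L : V → ℤ) (z v : V) (n : ℕ) :
    ∑ w : G.Walk z v n, w.ascWeight L ≤ 1 :=
  (Finset.single_le_sum (f := fun v => ∑ w : G.Walk z v n, w.ascWeight L)
    (fun _ _ => Finset.sum_nonneg fun w _ => w.ascWeight_nonneg L) (Finset.mem_univ v)).trans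
    (sum_sum_ascWeight_le_one L z n)

theorem Walk.ascWeight_reverse {x y : V} {n : ℕ} (L : V → ℤ) (w : G.Walk x y n) :
    w.reverse.ascWeight L = ∏ i : Fin n, G.ascStep L (w.vert i.succ) (w.vert i.castSucc) := by
  simp only [ascWeight, reverse, Fin.rev_castSucc, Fin.rev_succ]
  exact Fintype.prod_equiv Fin.revPerm _ _ fun i => rfl

theorem Walk.two_le_mul_ascWeight_add_ascWeight_reverse [Finite E] {Δ : ℕ}
    (hΔ : ∀ v, G.degree v ≤ Δ) (L : V → ℤ) {x y : V} {n : ℕ} (w : G.Walk x y n)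
    (hw : ∀ i : Fin n, L (w.vert i.succ) = L (w.vert i.castSucc) + 1) :
    2 ≤ 2 * ((Δ : ℝ) / 2) ^ n * (w.ascWeight L + w.reverse.ascWeight (-L)) := by
  have hdesc (i : Fin n) : (-L) (w.vert i.castSucc) = (-L) (w.vert i.succ) + 1 := by
    simp only [Pi.neg_apply, hw i]; ring
  have hfwd : w.ascWeight L = (∏ i : Fin n, (G.ascDegree L (w.vert i.castSucc) : ℝ))⁻¹ := by
    rw [← Finset.prod_inv_distrib]
    exact Finset.prod_congr rfl fun i _ => ascStep_of_eq (hw i)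
  have hbwd : w.reverse.ascWeight (-L) =
      (∏ i : Fin n, (G.ascDegree (-L) (w.vert i.succ) : ℝ))⁻¹ := by
    rw [ascWeight_reverse, ← Finset.prod_inv_distrib]
    exact Finset.prod_congr rfl fun i _ => ascStep_of_eq (hdesc i)
  rw [hfwd, hbwd]
  refine two_le_mul_inv_add_inv ?_ ?_ (by positivity) ?_
  · exact Finset.prod_pos fun i _ => Nat.cast_pos.mpr (ascDegree_pos (w.ends_eq i) (hw i))
  · refine Finset.prod_pos fun i _ => Nat.cast_pos.mpr (ascDegree_pos (e := w.edge i) ?_ (hdesc i))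
    rw [w.ends_eq i, Sym2.eq_swap]
  · refine prod_castSucc_mul_prod_succ_le (fun i => (G.ascDegree L (w.vert i) : ℝ))
      (fun i => (G.ascDegree (-L) (w.vert i) : ℝ)) (fun _ => by positivity)
      (fun _ => by positivity) fun i => ?_
    exact_mod_cast (ascDegree_add_ascDegree_neg_le_degree L _).trans (hΔ _)

end Multigraph

theorem numShortestPaths_le_two_mul_half_pow_general {V E : Type} [Fintype V] [Fintype E]
    (G : Multigraph V E) (Δ : ℕ) (hΔ : ∀ v : V, G.degree v ≤ Δ)
    (x y : V) (t : ℕ) (ht : G.dist x y = t) :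
    (G.numShortestPaths x y : ℝ) ≤ 2 * ((Δ : ℝ) / 2) ^ t := by
  subst ht
  set L : V → ℤ := fun v => G.dist x v
  set C := 2 * ((Δ : ℝ) / 2) ^ G.dist x y
  have hfwd : ∑ w : G.Walk x y (G.dist x y), w.ascWeight L ≤ 1 :=
    Multigraph.sum_ascWeight_le_one L x y _
  have hbwd : ∑ w : G.Walk x y (G.dist x y), w.reverse.ascWeight (-L) ≤ 1 :=
    ((Multigraph.Walk.reverseEquiv x y _).sum_comp (fun w => w.ascWeight (-L))).le.trans
      (Multigraph.sum_ascWeight_le_one (-L) y x _)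
  have hpaths : ∑ _w : G.Walk x y (G.dist x y), (2 : ℝ) ≤
      C * (∑ w : G.Walk x y (G.dist x y), w.ascWeight L +
        ∑ w : G.Walk x y (G.dist x y), w.reverse.ascWeight (-L)) := by
    rw [← Finset.sum_add_distrib, Finset.mul_sum]
    refine Finset.sum_le_sum fun w _ => w.two_le_mul_ascWeight_add_ascWeight_reverse hΔ L
      fun i => ?_
    simp only [L, w.dist_vert_of_length_dist, Fin.val_succ, Fin.val_castSucc]
    push_cast; ring
  rw [Multigraph.numShortestPaths, Nat.card_eq_fintype_card]
  simp only [Finset.sum_const, Finset.card_univ, nsmul_eq_mul] at hpaths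
  nlinarith [show 0 ≤ C by positivity]

/-- In a multigraph of maximum degree at most Δ, the number of
shortest paths between vertices at distance t is at most 2 · (Δ/2)^t. -/
theorem numShortestPaths_le_two_mul_half_pow {V E : Type} [Fintype V] [Fintype E]
    (G : Multigraph V E) (Δ : ℕ) (hΔ1 : 1 ≤ Δ) (hΔ : ∀ v : V, G.degree v ≤ Δ)
    (x y : V) (t : ℕ) (ht : G.dist x y = t) :
    (G.numShortestPaths x y : ℝ) ≤ 2 * ((Δ : ℝ) / 2) ^ t :=
  numShortestPaths_le_two_mul_half_pow_general G Δ hΔ x y t ht
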